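/- Let p be an odd prime and x ∈ ZMod p with x ≠ 0. Then ∑_{n=1}^{p-1} T_n(x) · ((-2)⁻¹)^n = (x-1)/x in ZMod p, where T_n(x) denotes the n-th Touchard polynomial evaluated at x (reduced mod p). -/

import Mathlib

/-!
Over `ZMod p` the Touchard polynomials of degree `< p` are the moments of a discrete Poisson
distribution: the weights `a j = x ^ j / j! · e^{-x}`, with the exponential suitably truncated,
satisfy `∑ j, a j = 1` and `(j + 1) a (j + 1) = x (a j + 1)` on all of `ZMod p`, and under these two
relations the recursion of `T_n` becomes the invariance of `∑ j` under `j ↦ j + 1`, so that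
`T_n(x) = ∑ j, a j * j ^ n`. Then `∑_{n=1}^{p-1} T_n(x) u^n = ∑ j, a j ∑_n (j u)^n` only sees the
residue `j = u⁻¹ = -2`, where the geometric sum is `p - 1 = -1`, and the recursion at `j = -1, -2`
gives `x (a (-2) + 1) = 1`.
-/

open Polynomial

/-- The Touchard polynomials in `ℤ[X]`, determined by `touchard 0 = 1` and
`touchard (n+1) = X * ∑_{k=0}^{n} C(n,k) * touchard k`. -/
noncomputable def touchard : ℕ → ℤ[X]
  | 0 => 1
  | n + 1 => X * ∑ k ∈ (Finset.range (n + 1)).attach, (n.choose k : ℤ[X]) * touchard k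
decreasing_by exact Finset.mem_range.mp k.2

open Finset
open scoped Nat

theorem touchard_zero : touchard 0 = 1 := by
  rw [touchard]

theorem touchard_succ (n : ℕ) :
    touchard (n + 1) = X * ∑ k ∈ range (n + 1), (n.choose k : ℤ[X]) * touchard k := by
  rw [touchard, sum_attach (range (n + 1)) fun k => (n.choose k : ℤ[X]) * touchard k]

namespace FiniteField

variable {K : Type*} [Field K] [Fintype K] [DecidableEq K]

theorem geom_sum_card (u : K) :
    ∑ n ∈ range (Fintype.card K), u ^ n = if u = 1 then 0 else 1 := by
  split_ifs with hu
  · simp [hu]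
  · rw [geom_sum_eq hu, pow_card, div_self (sub_ne_zero.mpr hu)]

theorem sum_Icc_one_pow (u : K) :
    ∑ n ∈ Icc 1 (Fintype.card K - 1), u ^ n = if u = 1 then -1 else 0 := by
  have hq : 1 ≤ Fintype.card K := Fintype.card_pos
  have hsplit := sum_range_add_sum_Ico (fun n => u ^ n) hq
  rw [geom_sum_card, sum_range_one, pow_zero] at hsplit
  rw [← Ico_add_one_right_eq_Icc, Nat.sub_add_cancel hq]
  split_ifs at hsplit ⊢ <;> linear_combination hsplit

end FiniteField

section PoissonWeights

variable {K : Type*} [Field K] [Fintype K]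

/-- A discrete analogue, on a finite field, of the Poisson distribution `e^{-x} x^j / j!`. The
inhomogeneous term `x` is invisible to the moments of order below `Fintype.card K` (the power sums
`∑ j, j ^ m` vanish there), and it is what makes the recursion solvable all around the cycle. -/
structure IsPoissonWeights (x : K) (a : K → K) : Prop where
  sum_eq_one : ∑ j, a j = 1
  add_one_mul : ∀ j, (j + 1) * a (j + 1) = x * (a j + 1)

namespace IsPoissonWeights

variable {x : K} {a : K → K}

theorem aeval_touchard (h : IsPoissonWeights x a) {n : ℕ} (hn : n < Fintype.card K) :
    aeval x (touchard n) = ∑ j, a j * j ^ n := by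
  induction n using Nat.strong_induction_on with
  | _ n ih =>
  cases n with
  | zero => simp [touchard_zero, h.sum_eq_one]
  | succ m =>
    have hterm : ∀ k ∈ range (m + 1),
        aeval x ((m.choose k : ℤ[X]) * touchard k) = ∑ j, a j * (j ^ k * m.choose k) := by
      intro k hk
      have hkm := mem_range.mp hk
      rw [map_mul, map_natCast, ih k hkm (by omega), mul_sum]
      exact sum_congr rfl fun j _ => by ring
    have hshift : ∑ j : K, (j + 1) ^ m = 0 := by
      rw [Fintype.sum_equiv (Equiv.addRight (1 : K)) (fun j => (j + 1) ^ m) (fun j => j ^ m)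
        fun _ => rfl, FiniteField.sum_pow_lt_card_sub_one K m (by omega)]
    calc aeval x (touchard (m + 1))
        = x * ∑ j, a j * (j + 1) ^ m := by
          rw [touchard_succ, map_mul, aeval_X, map_sum, sum_congr rfl hterm, sum_comm]
          simp only [← mul_sum, add_pow, one_pow, mul_one]
      _ = ∑ j, (j + 1) * a (j + 1) * (j + 1) ^ m - x * ∑ j : K, (j + 1) ^ m := by
          simp only [h.add_one_mul, mul_sum, ← sum_sub_distrib]
          exact sum_congr rfl fun j _ => by ring
      _ = ∑ j, a j * j ^ (m + 1) := by
          rw [hshift, mul_zero, sub_zero]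
          exact Fintype.sum_equiv (Equiv.addRight (1 : K)) _ _ fun j => by
            simp only [Equiv.coe_addRight]
            ring

theorem sum_Icc_touchard_mul_pow (h : IsPoissonWeights x a) {u : K} (hu : u ≠ 0) :
    ∑ n ∈ Icc 1 (Fintype.card K - 1), aeval x (touchard n) * u ^ n = -a u⁻¹ := by
  calc ∑ n ∈ Icc 1 (Fintype.card K - 1), aeval x (touchard n) * u ^ n
      = ∑ j, a j * ∑ n ∈ Icc 1 (Fintype.card K - 1), (j * u) ^ n := by
        have hterm : ∀ n ∈ Icc 1 (Fintype.card K - 1),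
            aeval x (touchard n) * u ^ n = ∑ j, a j * (j * u) ^ n := by
          intro n hn
          have hnq := (mem_Icc.mp hn).2
          rw [h.aeval_touchard (by have := Fintype.card_pos (α := K); omega), sum_mul]
          exact sum_congr rfl fun j _ => by ring
        rw [sum_congr rfl hterm, sum_comm]
        simp only [mul_sum]
    _ = -a u⁻¹ := by
        classical
        simp only [FiniteField.sum_Icc_one_pow, mul_eq_one_iff_eq_inv₀ hu, mul_ite, mul_neg,
          mul_one, mul_zero, sum_ite_eq', mem_univ, if_true]

theorem mul_apply_neg_two_add_one (h : IsPoissonWeights x a) (hx : x ≠ 0) :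
    x * (a (-2) + 1) = 1 := by
  have h0 := h.add_one_mul (-1)
  have h1 := h.add_one_mul (-2)
  rw [neg_add_cancel, zero_mul, zero_eq_mul, or_iff_right hx] at h0
  rw [show (-2 : K) + 1 = -1 by ring] at h1
  linear_combination -h0 - h1

end IsPoissonWeights

end PoissonWeights

namespace ZMod

theorem sum_comp_val {M : Type*} [AddCommMonoid M] (n : ℕ) [NeZero n] (f : ℕ → M) :
    ∑ j : ZMod n, f j.val = ∑ k ∈ range n, f k :=
  sum_nbij' val Nat.cast (fun j _ => mem_range.mpr (val_lt j)) (fun _ _ => mem_univ _)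
    (fun j _ => natCast_zmod_val j) (fun _ hk => val_cast_of_lt (mem_range.mp hk))
    (fun _ _ => rfl)

variable {p : ℕ} [Fact p.Prime]

theorem natCast_factorial_ne_zero {k : ℕ} (hk : k < p) : (k ! : ZMod p) ≠ 0 := by
  rw [Ne, natCast_eq_zero_iff, (Fact.out : p.Prime).dvd_factorial]
  omega

theorem factorial_mul_factorial_sub_one_sub {k : ℕ} (hk : k < p) :
    (k ! * (p - 1 - k)! : ZMod p) = (-1) ^ (k + 1) := by
  have hdesc : ((p - 1).descFactorial k : ZMod p) = (-1) ^ k * k ! := by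
    have hsign : ∏ _i ∈ range k, (-1 : ZMod p) = (-1) ^ k := by rw [prod_const, card_range]
    rw [Nat.descFactorial_eq_prod_range, ← prod_range_add_one_eq_factorial, Nat.cast_prod,
      Nat.cast_prod, ← hsign, ← prod_mul_distrib]
    refine prod_congr rfl fun i hi => ?_
    have hi := mem_range.mp hi
    rw [Nat.cast_sub (by omega), Nat.cast_sub (by omega), natCast_self]
    push_cast
    ring
  have hwilson := congr_arg (Nat.cast : ℕ → ZMod p)
    (Nat.factorial_mul_descFactorial (n := p - 1) (k := k) (by omega))
  push_cast at hwilson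
  rw [hdesc, wilsons_lemma] at hwilson
  have hsq : ((-1 : ZMod p) ^ k) ^ 2 = 1 := by
    rw [← pow_mul, pow_mul', neg_one_sq, one_pow]
  linear_combination (-1) ^ k * hwilson - (k ! * (p - 1 - k)! : ZMod p) * hsq

theorem add_pow_mul_inv_factorial (y z : ZMod p) {s : ℕ} (hs : s < p) :
    ∑ k ∈ range (s + 1), y ^ k * (k ! : ZMod p)⁻¹ * (z ^ (s - k) * ((s - k)! : ZMod p)⁻¹)
      = (y + z) ^ s * (s ! : ZMod p)⁻¹ := by
  rw [add_pow, sum_mul]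
  refine sum_congr rfl fun k hk => ?_
  have hks : k ≤ s := Nat.lt_succ_iff.mp (mem_range.mp hk)
  have hchoose := congr_arg (Nat.cast : ℕ → ZMod p) (Nat.choose_mul_factorial_mul_factorial hks)
  push_cast at hchoose
  have hk_fact := natCast_factorial_ne_zero (p := p) (k := k) (by omega)
  have hsk_fact := natCast_factorial_ne_zero (p := p) (k := s - k) (by omega)
  have hs_fact := natCast_factorial_ne_zero hs
  field_simp
  linear_combination -y ^ k * z ^ (s - k) * hchoose

/-- `x ^ k / k! · e^{-x}`, with the exponential truncated so that no factorial of order `≥ p`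
appears. -/
noncomputable def truncPoissonWeight (p : ℕ) (x : ZMod p) (k : ℕ) : ZMod p :=
  x ^ k * (k ! : ZMod p)⁻¹ * ∑ m ∈ range (p - k), (-x) ^ m * (m ! : ZMod p)⁻¹

theorem sum_truncPoissonWeight (x : ZMod p) : ∑ k ∈ range p, truncPoissonWeight p x k = 1 := by
  simp only [truncPoissonWeight, mul_sum]
  rw [← sum_range_diag_flip p fun k m =>
    x ^ k * (k ! : ZMod p)⁻¹ * ((-x) ^ m * (m ! : ZMod p)⁻¹)]
  rw [sum_congr rfl fun s hs => add_pow_mul_inv_factorial x (-x) (mem_range.mp hs)]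
  simp [add_neg_cancel, zero_pow_eq, sum_ite_eq', (Fact.out : p.Prime).pos]

theorem truncPoissonWeight_succ (x : ZMod p) {k : ℕ} (hk : k < p) :
    ((k + 1 : ℕ) : ZMod p) * truncPoissonWeight p x (k + 1)
      = x * (truncPoissonWeight p x k + 1) := by
  have hlhs : ((k + 1 : ℕ) : ZMod p) * truncPoissonWeight p x (k + 1)
      = x * (x ^ k * (k ! : ZMod p)⁻¹ *
          ∑ m ∈ range (p - (k + 1)), (-x) ^ m * (m ! : ZMod p)⁻¹) := by
    rcases (show k + 1 ≤ p from hk).lt_or_eq with hk1 | hk1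
    · have hk_fact := natCast_factorial_ne_zero hk
      have hk1_fact := natCast_factorial_ne_zero hk1
      have hk1_ne : ((k + 1 : ℕ) : ZMod p) ≠ 0 := by
        rw [Ne, natCast_eq_zero_iff]
        exact Nat.not_dvd_of_pos_of_lt k.succ_pos hk1
      rw [truncPoissonWeight, Nat.factorial_succ, Nat.cast_mul]
      field_simp
      ring
    · simp [truncPoissonWeight, ← hk1]
  have hboundary : x * (x ^ k * (k ! : ZMod p)⁻¹) *
      ((-x) ^ (p - (k + 1)) * ((p - (k + 1))! : ZMod p)⁻¹) = -x := by
    have hinv : ((k ! * (p - 1 - k)! : ZMod p))⁻¹ = (-1) ^ (k + 1) := by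
      rw [factorial_mul_factorial_sub_one_sub hk, ← inv_pow, inv_neg_one]
    rw [show p - (k + 1) = p - 1 - k by omega]
    calc _ = (-1 * x) ^ (k + 1) * (-x) ^ (p - 1 - k) := by
          rw [mul_pow, ← hinv, mul_inv]
          ring
      _ = -x := by
          rw [neg_one_mul, ← pow_add, show k + 1 + (p - 1 - k) = p by omega, pow_card]
  rw [hlhs, truncPoissonWeight, show p - k = p - (k + 1) + 1 by omega, sum_range_succ]
  linear_combination -hboundary

theorem isPoissonWeights_truncPoissonWeight (x : ZMod p) :
    IsPoissonWeights x fun j => truncPoissonWeight p x j.val where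
  sum_eq_one := by rw [sum_comp_val p (truncPoissonWeight p x), sum_truncPoissonWeight]
  add_one_mul j := by
    have hj : j + 1 = ((j.val + 1 : ℕ) : ZMod p) := by rw [Nat.cast_succ, natCast_zmod_val]
    rw [hj, ← truncPoissonWeight_succ x (val_lt j), val_natCast]
    rcases (show j.val + 1 ≤ p from val_lt j).lt_or_eq with hlt | heq
    · rw [Nat.mod_eq_of_lt hlt]
    · rw [heq, natCast_self, zero_mul, zero_mul]

end ZMod

theorem touchard_sum_m_two (p : ℕ) [hp : Fact p.Prime] (hp2 : p ≠ 2)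
    (x : ZMod p) (hx : x ≠ 0) :
    ∑ n ∈ Finset.Icc 1 (p - 1), (aeval x (touchard n)) * ((-2 : ZMod p)⁻¹) ^ n
      = (x - 1) / x := by
  have hweights := ZMod.isPoissonWeights_truncPoissonWeight x
  have htwo : (-2 : ZMod p) ≠ 0 :=
    neg_ne_zero.mpr (Ring.two_ne_zero (by rwa [ZMod.ringChar_zmod_n]))
  have hsum := hweights.sum_Icc_touchard_mul_pow (inv_ne_zero htwo)
  rw [ZMod.card, inv_inv] at hsum
  rw [hsum, eq_div_iff hx]
  linear_combination -hweights.mul_apply_neg_two_add_one hx
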